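/- arXiv:1702.00252 — 3 statements merged into one kernel-verified Lean document; each statement's English description precedes it below -/
import Mathlib

section
/- Let $m \geq 3$ and let $H$ be a positive definite symmetric $m \times m$ real matrix with $\operatorname{tr}(H) \leq 1$. Then $\frac{(\det H)^{1/2}}{\det(I - H)} \leq \frac{m^{m/2}}{(m-1)^m}$, with equality if and only if $H = \frac{1}{m} I$. -/
/-!
Diagonalising `H`, the claim becomes a statement about its eigenvalues `λᵢ > 0`, `∑ λᵢ ≤ 1`:
with `h x = 2 log (1 - x) - log x` one has `√(det H) / det (I - H) = exp (-(∑ h λᵢ) / 2)`, so it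
suffices that `∑ h λᵢ ≥ m h (1/m)`, with equality only if every `λᵢ = 1/m`. As `h` decreases,
`m h (1/m) ≤ m h (S/m)` for `S = ∑ λᵢ`.

`h` is convex only on `(0, √2 - 1]`, but `h' x ≤ h' y` whenever `x ≤ y` and `x + y + xy < 1`.
Hence `β ↦ h β + k h ((T - β)/k)` increases from `β = T/(k+1)` as long as that condition holds.
Applied to the largest eigenvalue `a` and then to the second largest `b`, this gives
`m h (S/m) ≤ h a + h b + (m - 2) h ((S - a - b)/(m - 2))`, strictly unless `a = S/m`. The other
eigenvalues are at most `1/3`, inside the convexity range, and Jensen's inequality finishes.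
-/

open Real Set Finset

noncomputable def bcgPotential (x : ℝ) : ℝ := 2 * log (1 - x) - log x

noncomputable def bcgPotentialDeriv (x : ℝ) : ℝ := -2 / (1 - x) - 1 / x

lemma hasDerivAt_bcgPotential {x : ℝ} (hx0 : 0 < x) (hx1 : x < 1) :
    HasDerivAt bcgPotential (bcgPotentialDeriv x) x := by
  have h := ((((hasDerivAt_id x).const_sub 1).log (by simp; linarith)).const_mul 2).sub
    ((hasDerivAt_id x).log hx0.ne')
  exact h.congr_deriv (by simp only [bcgPotentialDeriv, id]; ring)

lemma strictAntiOn_bcgPotential : StrictAntiOn bcgPotential (Ioo 0 1) := by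
  intro x hx y hy hxy
  have h1 := log_lt_log (sub_pos.2 hy.2) (sub_lt_sub_left hxy 1)
  have h2 := log_lt_log hx.1 hxy
  simp only [bcgPotential]
  linarith

lemma bcgPotentialDeriv_lt {x y : ℝ} (hx : 0 < x) (hxy : x < y) (hsmall : x + y + x * y < 1) :
    bcgPotentialDeriv x < bcgPotentialDeriv y := by
  have hy : 0 < y := hx.trans hxy
  have hx1 : 0 < 1 - x := by nlinarith
  have hy1 : 0 < 1 - y := by nlinarith
  have key : bcgPotentialDeriv y - bcgPotentialDeriv x =
      (y - x) * (1 - x - y - x * y) / (x * y * ((1 - x) * (1 - y))) := by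
    unfold bcgPotentialDeriv
    field_simp [hx.ne', hy.ne', hx1.ne', hy1.ne']
    ring
  have hpos : 0 < (y - x) * (1 - x - y - x * y) / (x * y * ((1 - x) * (1 - y))) :=
    div_pos (mul_pos (sub_pos.2 hxy) (by linarith)) (by positivity)
  linarith

lemma bcgPotentialDeriv_le {x y : ℝ} (hx : 0 < x) (hxy : x ≤ y) (hsmall : x + y + x * y < 1) :
    bcgPotentialDeriv x ≤ bcgPotentialDeriv y := by
  rcases hxy.eq_or_lt with rfl | hlt
  · rfl
  · exact (bcgPotentialDeriv_lt hx hlt hsmall).le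

lemma convexOn_bcgPotential : ConvexOn ℝ (Ioc 0 (2 / 5)) bcgPotential := by
  have hderiv : ∀ x ∈ Ioc (0 : ℝ) (2 / 5), HasDerivAt bcgPotential (bcgPotentialDeriv x) x :=
    fun x hx => hasDerivAt_bcgPotential hx.1 (by linarith [hx.2])
  refine MonotoneOn.convexOn_of_deriv (convex_Ioc 0 (2 / 5))
    (fun x hx => (hderiv x hx).continuousAt.continuousWithinAt)
    (fun x hx => (hderiv x (interior_subset hx)).differentiableAt.differentiableWithinAt) ?_
  rw [interior_Ioc]
  intro x hx y hy hxy
  rw [(hderiv x (Ioo_subset_Ioc_self hx)).deriv, (hderiv y (Ioo_subset_Ioc_self hy)).deriv]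
  exact bcgPotentialDeriv_le hx.1 hxy (by nlinarith [hx.2, hy.2, hx.1, hy.1])

lemma ConvexOn.card_mul_map_average_le {ι : Type*} {s : Set ℝ} {f : ℝ → ℝ} (hf : ConvexOn ℝ s f)
    {t : Finset ι} (ht : t.Nonempty) {x : ι → ℝ} (hx : ∀ i ∈ t, x i ∈ s) :
    #t * f ((∑ i ∈ t, x i) / #t) ≤ ∑ i ∈ t, f (x i) := by
  have hcard : (0 : ℝ) < #t := by exact_mod_cast ht.card_pos
  have hw : ∑ _i ∈ t, (#t : ℝ)⁻¹ = 1 := by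
    rw [sum_const, nsmul_eq_mul, mul_inv_cancel₀ hcard.ne']
  have h := hf.map_sum_le (fun _ _ => inv_nonneg.2 hcard.le) hw hx
  simp only [smul_eq_mul, ← mul_sum] at h
  rw [div_eq_inv_mul]
  calc (#t : ℝ) * f ((#t : ℝ)⁻¹ * ∑ i ∈ t, x i)
      ≤ #t * ((#t : ℝ)⁻¹ * ∑ i ∈ t, f (x i)) := mul_le_mul_of_nonneg_left h hcard.le
    _ = ∑ i ∈ t, f (x i) := by field_simp

noncomputable def splitPotential (k T β : ℝ) : ℝ :=
  bcgPotential β + k * bcgPotential ((T - β) / k)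

lemma splitPotential_div_add_one {k : ℝ} (hk : 0 < k) (T : ℝ) :
    splitPotential k T (T / (k + 1)) = (k + 1) * bcgPotential (T / (k + 1)) := by
  have hk1 : k + 1 ≠ 0 := by linarith
  rw [splitPotential, show (T - T / (k + 1)) / k = T / (k + 1) by field_simp [hk.ne', hk1]; ring]
  ring

lemma hasDerivAt_splitPotential {k T β : ℝ} (hk : k ≠ 0) (hβ0 : 0 < β) (hβ1 : β < 1)
    (hc0 : 0 < (T - β) / k) (hc1 : (T - β) / k < 1) :
    HasDerivAt (splitPotential k T)
      (bcgPotentialDeriv β - bcgPotentialDeriv ((T - β) / k)) β := by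
  have hinner : HasDerivAt (fun y => (T - y) / k) (-1 / k) β := by
    simpa using ((hasDerivAt_id β).const_sub T).div_const k
  have h := (hasDerivAt_bcgPotential hβ0 hβ1).add
    (((hasDerivAt_bcgPotential hc0 hc1).comp β hinner).const_mul k)
  exact h.congr_deriv (by field_simp; ring)

lemma strictMonoOn_splitPotential {k T b : ℝ} (hk : 0 < k) (hbT : b < T)
    (hsmall : ∀ β ∈ Icc (T / (k + 1)) b, β + (T - β) / k + β * ((T - β) / k) < 1) :
    StrictMonoOn (splitPotential k T) (Icc (T / (k + 1)) b) := by
  have hfacts : ∀ β ∈ Icc (T / (k + 1)) b,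
      0 < (T - β) / k ∧ (T - β) / k ≤ β ∧ 0 < β ∧ β < 1 ∧ (T - β) / k < 1 := by
    intro β hβ
    have hc0 : 0 < (T - β) / k := div_pos (by linarith [hβ.2]) hk
    have hcβ : (T - β) / k ≤ β := by
      rw [div_le_iff₀ hk]
      have := (div_le_iff₀ (by linarith : (0 : ℝ) < k + 1)).1 hβ.1
      linarith
    have hβ0 : 0 < β := hc0.trans_le hcβ
    have := hsmall β hβ
    exact ⟨hc0, hcβ, hβ0, by nlinarith, by nlinarith⟩
  have hderiv : ∀ β ∈ Icc (T / (k + 1)) b, HasDerivAt (splitPotential k T)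
      (bcgPotentialDeriv β - bcgPotentialDeriv ((T - β) / k)) β := by
    intro β hβ
    obtain ⟨hc0, -, hβ0, hβ1, hc1⟩ := hfacts β hβ
    exact hasDerivAt_splitPotential hk.ne' hβ0 hβ1 hc0 hc1
  refine strictMonoOn_of_hasDerivWithinAt_pos (convex_Icc _ _)
    (fun β hβ => (hderiv β hβ).continuousAt.continuousWithinAt)
    (fun β hβ => (hderiv β (interior_subset hβ)).hasDerivWithinAt) ?_
  rw [interior_Icc]
  intro β hβ
  obtain ⟨hc0, -, -, -, -⟩ := hfacts β (Ioo_subset_Icc_self hβ)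
  have hcβ : (T - β) / k < β := by
    rw [div_lt_iff₀ hk]
    have := (div_lt_iff₀ (by linarith : (0 : ℝ) < k + 1)).1 hβ.1
    linarith
  have := hsmall β (Ioo_subset_Icc_self hβ)
  exact sub_pos.2 (bcgPotentialDeriv_lt hc0 hcβ (by linarith))

lemma mul_bcgPotential_lt_splitPotential {k T a : ℝ} (hk : 2 ≤ k) (ha : T / (k + 1) < a)
    (haT : a < T) (hT : T ≤ 1) :
    (k + 1) * bcgPotential (T / (k + 1)) < splitPotential k T a := by
  have hk0 : 0 < k := by linarith
  rw [← splitPotential_div_add_one hk0]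
  refine strictMonoOn_splitPotential hk0 haT ?_ (left_mem_Icc.2 ha.le) (right_mem_Icc.2 ha.le) ha
  intro β hβ
  have hT0 : 0 < T := by
    have := (div_lt_iff₀ (by linarith : (0 : ℝ) < k + 1)).1 (ha.trans haT)
    nlinarith
  have hβ0 : 0 < β := (div_pos hT0 (by linarith)).trans_le hβ.1
  have hβ1 : β < 1 := by linarith [hβ.2]
  have hkey : (T - β) * (1 + β) < (1 - β) * k := by
    calc (T - β) * (1 + β) ≤ (1 - β) * (1 + β) :=
          mul_le_mul_of_nonneg_right (by linarith) (by linarith)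
      _ < (1 - β) * k := mul_lt_mul_of_pos_left (by linarith) (by linarith)
  calc β + (T - β) / k + β * ((T - β) / k) = β + (T - β) * (1 + β) / k := by ring
    _ < β + (1 - β) := by gcongr; exact (div_lt_iff₀ hk0).2 hkey
    _ = 1 := by ring

lemma mul_bcgPotential_le_splitPotential {k T b : ℝ} (hk : 1 ≤ k) (hb : T / (k + 1) ≤ b)
    (hbT : b < T) (hTb : T + b ≤ 1) :
    (k + 1) * bcgPotential (T / (k + 1)) ≤ splitPotential k T b := by
  have hk0 : 0 < k := by linarith
  rw [← splitPotential_div_add_one hk0]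
  refine (strictMonoOn_splitPotential hk0 hbT ?_).monotoneOn (left_mem_Icc.2 hb)
    (right_mem_Icc.2 hb) hb
  intro β hβ
  have hb0 : 0 < b := by
    have := (div_le_iff₀ (by linarith : (0 : ℝ) < k + 1)).1 hb
    nlinarith
  have hβ0 : 0 < β := (div_pos (hb0.trans hbT) (by linarith)).trans_le hβ.1
  have hc0 : 0 ≤ (T - β) / k := div_nonneg (by linarith [hβ.2]) hk0.le
  have hcT : (T - β) / k ≤ T - β := div_le_self (by linarith [hβ.2]) hk
  have hc1 : (T - β) / k < 1 := by linarith [hβ.2]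
  nlinarith [hβ.2]

lemma mul_bcgPotential_div_lt_of_two_largest {n S a b : ℝ} (hn : 3 ≤ n) (hS : S ≤ 1)
    (ha : S / n < a) (hba : b ≤ a) (hb : S - a ≤ (n - 1) * b) (hrest : 0 < S - a - b) :
    n * bcgPotential (S / n) <
      bcgPotential a + bcgPotential b + (n - 2) * bcgPotential ((S - a - b) / (n - 2)) := by
  have hb0 : 0 < b := by nlinarith
  have h₁ := mul_bcgPotential_lt_splitPotential (k := n - 1) (by linarith)
    (by rwa [sub_add_cancel]) (by linarith) hS
  have h₂ := mul_bcgPotential_le_splitPotential (k := n - 2) (T := S - a) (b := b) (by linarith)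
    (by rw [show n - 2 + 1 = n - 1 by ring, div_le_iff₀ (by linarith)]; linarith)
    (by linarith) (by linarith)
  rw [sub_add_cancel] at h₁
  rw [show n - 2 + 1 = n - 1 by ring] at h₂
  simp only [splitPotential, sub_sub] at h₁ h₂ ⊢
  linarith

lemma sum_div_card_lt_of_le_of_exists_ne {ι : Type*} [Fintype ι] {x : ι → ℝ} {i₀ : ι}
    (hmax : ∀ i, x i ≤ x i₀) (hne : ∃ i, x i ≠ (∑ j, x j) / Fintype.card ι) :
    (∑ j, x j) / Fintype.card ι < x i₀ := by
  by_contra! hle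
  obtain ⟨i, hi⟩ := hne
  have hlt : ∑ i, x i < ∑ _i : ι, (∑ j, x j) / Fintype.card ι :=
    sum_lt_sum (fun j _ => (hmax j).trans hle) ⟨i, mem_univ i, ((hmax i).trans hle).lt_of_ne hi⟩
  have hcard : (Fintype.card ι : ℝ) ≠ 0 := by
    have : Nonempty ι := ⟨i⟩
    positivity
  rw [sum_const, card_univ, nsmul_eq_mul, mul_div_cancel₀ _ hcard] at hlt
  exact hlt.false

theorem card_mul_bcgPotential_average_lt_sum {ι : Type*} [Fintype ι] (hn : 3 ≤ Fintype.card ι)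
    {x : ι → ℝ} (hx : ∀ i, 0 < x i) (hsum : ∑ i, x i ≤ 1)
    (hne : ∃ i, x i ≠ (∑ j, x j) / Fintype.card ι) :
    Fintype.card ι * bcgPotential ((∑ i, x i) / Fintype.card ι) < ∑ i, bcgPotential (x i) := by
  classical
  set n : ℝ := (Fintype.card ι : ℝ)
  set S := ∑ i, x i
  have hn3 : (3 : ℝ) ≤ n := by simp only [n]; exact_mod_cast hn
  have hne_univ : (univ : Finset ι).Nonempty :=
    univ_nonempty_iff.2 (Fintype.card_pos_iff.1 (by omega))
  obtain ⟨i₀, -, hi₀⟩ := exists_max_image univ x hne_univ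
  have hcard₁ : #(univ.erase i₀) = Fintype.card ι - 1 := by
    rw [card_erase_of_mem (mem_univ _), card_univ]
  obtain ⟨j₀, hj₀, hj₀max⟩ := exists_max_image (univ.erase i₀) x
    (card_pos.1 (by omega))
  set R := (univ.erase i₀).erase j₀
  have hcardR : #R = Fintype.card ι - 2 := by
    rw [card_erase_of_mem hj₀, hcard₁]; omega
  have hRne : R.Nonempty := card_pos.1 (by omega)
  have hsplit : ∀ f : ℝ → ℝ, ∑ i, f (x i) = f (x i₀) + (f (x j₀) + ∑ k ∈ R, f (x k)) :=
    fun f => by rw [← add_sum_erase _ _ (mem_univ i₀), ← add_sum_erase (univ.erase i₀) _ hj₀]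
  have hS : S = x i₀ + (x j₀ + ∑ k ∈ R, x k) := hsplit id
  have ha : S / n < x i₀ := sum_div_card_lt_of_le_of_exists_ne (fun i => hi₀ i (mem_univ i)) hne
  have hb : S - x i₀ ≤ (n - 1) * x j₀ := by
    have := sum_le_card_nsmul _ x _ hj₀max
    rwa [nsmul_eq_mul, hcard₁, Nat.cast_sub (by omega), Nat.cast_one,
      sum_erase_eq_sub (mem_univ i₀)] at this
  have hR0 : 0 < ∑ k ∈ R, x k := sum_pos (fun k _ => hx k) hRne
  have hRsmall : ∀ k ∈ R, x k ∈ Set.Ioc 0 (2 / 5) := by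
    intro k hk
    have hkb : x k ≤ x j₀ := hj₀max k (mem_of_mem_erase hk)
    have hkR : x k ≤ ∑ k ∈ R, x k := single_le_sum (fun k _ => (hx k).le) hk
    have hba : x j₀ ≤ x i₀ := hi₀ j₀ (mem_univ _)
    exact ⟨hx k, by linarith⟩
  have hjensen := convexOn_bcgPotential.card_mul_map_average_le hRne hRsmall
  rw [hcardR, Nat.cast_sub (by omega), Nat.cast_ofNat] at hjensen
  have hpeel := mul_bcgPotential_div_lt_of_two_largest hn3 hsum ha (hi₀ j₀ (mem_univ _)) hb
    (by linarith)
  rw [show S - x i₀ - x j₀ = ∑ k ∈ R, x k by linarith] at hpeel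
  rw [hsplit]
  linarith

theorem card_mul_bcgPotential_inv_lt_sum {ι : Type*} [Fintype ι] (hn : 3 ≤ Fintype.card ι)
    {x : ι → ℝ} (hx : ∀ i, 0 < x i) (hsum : ∑ i, x i ≤ 1)
    (hne : ∃ i, x i ≠ (Fintype.card ι : ℝ)⁻¹) :
    Fintype.card ι * bcgPotential (Fintype.card ι : ℝ)⁻¹ < ∑ i, bcgPotential (x i) := by
  have hn3 : (3 : ℝ) ≤ Fintype.card ι := by exact_mod_cast hn
  have hS0 : 0 < ∑ i, x i :=
    sum_pos (fun i _ => hx i) (univ_nonempty_iff.2 (Fintype.card_pos_iff.1 (by omega)))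
  have hcore := card_mul_bcgPotential_average_lt_sum hn hx hsum
  rcases hsum.lt_or_eq with hlt | heq
  · have hanti : bcgPotential (Fintype.card ι : ℝ)⁻¹ <
        bcgPotential ((∑ i, x i) / Fintype.card ι) :=
      strictAntiOn_bcgPotential ⟨by positivity, by rw [div_lt_one (by positivity)]; linarith⟩
        ⟨by positivity, inv_lt_one_of_one_lt₀ (by linarith)⟩
        (by rw [div_eq_mul_inv]; exact mul_lt_of_lt_one_left (by positivity) hlt)
    have hle : Fintype.card ι * bcgPotential ((∑ i, x i) / Fintype.card ι) ≤
        ∑ i, bcgPotential (x i) := by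
      by_cases hall : ∃ i, x i ≠ (∑ j, x j) / Fintype.card ι
      · exact (hcore hall).le
      · push Not at hall
        rw [sum_congr rfl fun i _ => congrArg bcgPotential (hall i), sum_const, card_univ,
          nsmul_eq_mul]
    nlinarith
  · simpa only [heq, one_div] using hcore (by simpa only [heq, one_div] using hne)

lemma Matrix.IsHermitian.det_one_sub {𝕜 n : Type*} [RCLike 𝕜] [Fintype n] [DecidableEq n]
    {A : Matrix n n 𝕜} (hA : A.IsHermitian) :
    (1 - A).det = ∏ i, (1 - (hA.eigenvalues i : 𝕜)) := by
  rw [← map_one (Matrix.scalar n), ← eval_charpoly, hA.charpoly_eq, Polynomial.eval_prod]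
  simp

lemma Matrix.IsHermitian.eq_smul_one_iff {𝕜 n : Type*} [RCLike 𝕜] [Fintype n] [DecidableEq n]
    {A : Matrix n n 𝕜} (hA : A.IsHermitian) (c : ℝ) :
    A = c • (1 : Matrix n n 𝕜) ↔ ∀ i, hA.eigenvalues i = c := by
  have hc : c • (1 : Matrix n n 𝕜) = Unitary.conjStarAlgAut 𝕜 _ hA.eigenvectorUnitary
      (Matrix.diagonal fun _ => (c : 𝕜)) := by
    rw [← Matrix.smul_one_eq_diagonal, map_smul, map_one, RCLike.real_smul_eq_coe_smul (K := 𝕜)]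
  conv_lhs => rw [hA.spectral_theorem, hc]
  rw [EquivLike.apply_eq_iff_eq, Matrix.diagonal_injective.eq_iff, funext_iff]
  simp

lemma sqrt_prod_div_prod_one_sub_eq_exp {ι : Type*} [Fintype ι] {x : ι → ℝ}
    (h0 : ∀ i, 0 < x i) (h1 : ∀ i, x i < 1) :
    √(∏ i, x i) / ∏ i, (1 - x i) = exp (-(∑ i, bcgPotential (x i)) / 2) := by
  have hterm : ∀ i, exp (-(bcgPotential (x i) / 2)) = √(x i) / (1 - x i) := by
    intro i
    rw [bcgPotential, show -((2 * log (1 - x i) - log (x i)) / 2) =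
      log (x i) * (1 / 2) - log (1 - x i) by ring, exp_sub, exp_log (sub_pos.2 (h1 i)),
      ← rpow_def_of_pos (h0 i), sqrt_eq_rpow]
  rw [neg_div, sum_div, ← sum_neg_distrib, exp_sum]
  simp only [hterm]
  rw [prod_div_distrib, sqrt_prod _ (fun i _ => (h0 i).le)]

lemma rpow_half_div_sub_one_pow_eq_exp {n : ℕ} (hn : 1 < n) :
    (n : ℝ) ^ ((n : ℝ) / 2) / ((n : ℝ) - 1) ^ n =
      exp (-(n * bcgPotential (n : ℝ)⁻¹) / 2) := by
  have hn0 : (0 : ℝ) < n := by positivity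
  have hn1 : (0 : ℝ) < n - 1 := by
    rw [sub_pos]; exact_mod_cast hn
  have hlog : log (1 - (n : ℝ)⁻¹) = log (n - 1) - log n := by
    rw [show 1 - (n : ℝ)⁻¹ = (n - 1) / n by field_simp, log_div hn1.ne' hn0.ne']
  rw [bcgPotential, hlog, log_inv, rpow_def_of_pos hn0,
    show -(n * (2 * (log (n - 1) - log n) - -log n)) / 2 = log n * (n / 2) - n * log (n - 1) by
      ring, exp_sub, exp_nat_mul, exp_log hn1]

/-- **Besson–Courtois–Gallot determinant inequality.**
For `m ≥ 3` and a positive definite symmetric real `m × m` matrix `H` with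
`tr H ≤ 1`, one has `(det H)^(1/2) / det (I - H) ≤ m^(m/2) / (m-1)^m`,
with equality if and only if `H = (1/m) I`. -/
theorem bcg_det_inequality (m : ℕ) (hm : 3 ≤ m)
    (H : Matrix (Fin m) (Fin m) ℝ) (hpos : H.PosDef) (htr : H.trace ≤ 1) :
    Real.sqrt H.det / (1 - H).det ≤ (m : ℝ) ^ ((m : ℝ) / 2) / ((m : ℝ) - 1) ^ m ∧
    (Real.sqrt H.det / (1 - H).det = (m : ℝ) ^ ((m : ℝ) / 2) / ((m : ℝ) - 1) ^ m ↔
      H = ((m : ℝ)⁻¹) • (1 : Matrix (Fin m) (Fin m) ℝ)) := by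
  have hH := hpos.isHermitian
  set μ := hH.eigenvalues
  have hcard : 3 ≤ Fintype.card (Fin m) := by simpa using hm
  have hμ0 : ∀ i, 0 < μ i := hpos.eigenvalues_pos
  have hμsum : ∑ i, μ i ≤ 1 := by simpa [hH.trace_eq_sum_eigenvalues] using htr
  have hμ1 : ∀ i, μ i < 1 := fun i => by
    obtain ⟨j, hji⟩ := Fintype.exists_ne_of_one_lt_card (by omega) i
    exact (single_lt_sum hji (mem_univ i) (mem_univ j) (hμ0 j) fun k _ _ => (hμ0 k).le).trans_le
      hμsum
  have hratio : √H.det / (1 - H).det = exp (-(∑ i, bcgPotential (μ i)) / 2) := by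
    rw [hH.det_eq_prod_eigenvalues, hH.det_one_sub]
    exact sqrt_prod_div_prod_one_sub_eq_exp hμ0 hμ1
  rw [hratio, rpow_half_div_sub_one_pow_eq_exp (by omega), exp_le_exp, exp_eq_exp,
    hH.eq_smul_one_iff]
  by_cases hall : ∀ i, μ i = (m : ℝ)⁻¹
  · exact ⟨by simp [hall], iff_of_true (by simp [hall]) hall⟩
  · have := card_mul_bcgPotential_inv_lt_sum hcard hμ0 hμsum (by simpa using hall)
    simp only [Fintype.card_fin] at this
    exact ⟨by linarith, iff_of_false (by linarith) hall⟩
end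

section
/- Let $m \geq 3$. For every $\eta > 0$ there exists $\epsilon > 0$ such that for every positive definite symmetric $m \times m$ real matrix $H$ with $\operatorname{tr}(H) \leq 1$, if $\frac{(\det H)^{1/2}}{\det(I-H)} \geq \frac{m^{m/2}}{(m-1)^m} - \epsilon$, then $\|H - \frac{1}{m} I\| \leq \eta$ (in the operator norm). -/
/-!
With `λ` the eigenvalues of `H`, the square of `√det H / det (1 - H)` is `∏ λᵢ / (1 - λᵢ)²` and
`‖H - I/m‖ = maxᵢ |λᵢ - 1/m|`, so it suffices to keep this product uniformly below its value
`m^m / (m-1)^(2m)` at the centre of the simplex `∑ λᵢ ≤ 1`, away from the centre.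

If some `λⱼ > 7/10`, AM-GM on the other coordinates and the Weierstrass product inequality bound the
product by `(1 - λⱼ)^(m-3) / ((m-1)^(m-1) λⱼ)`, which is uniformly below the central value. On the
compact rest of the simplex the product is continuous and is maximal only at the centre: averaging
two unequal coordinates with sum `≤ 4/5` increases it, so the minimal and maximal coordinates of a
non-constant maximizer sum to more than `4/5`, which forces `m = 3` and a coordinate `> 3/5`, where
the vertex bound applies again. Compactness turns this strict inequality into a uniform gap.
-/

open Finset

theorem IsCompact.exists_lt_forall_le {X α : Type*} [TopologicalSpace X] [LinearOrder α]
    [TopologicalSpace α] [ClosedIciTopology α] [NoMinOrder α] {s : Set X} {f : X → α} {y : α}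
    (hs : IsCompact s) (hf : ContinuousOn f s) (h : ∀ x ∈ s, f x < y) :
    ∃ y' < y, ∀ x ∈ s, f x ≤ y' := by
  rcases s.eq_empty_or_nonempty with rfl | hne
  · obtain ⟨y', hy'⟩ := exists_lt y
    exact ⟨y', hy', by simp⟩
  · obtain ⟨x₀, hx₀, hmax⟩ := hs.exists_isMaxOn hne hf
    exact ⟨f x₀, h x₀ hx₀, fun x hx => hmax hx⟩

theorem Real.prod_le_arith_mean_pow_card {ι : Type*} (s : Finset ι) {f : ι → ℝ}
    (hf : ∀ i ∈ s, 0 ≤ f i) : ∏ i ∈ s, f i ≤ ((∑ i ∈ s, f i) / #s) ^ #s := by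
  rcases s.eq_empty_or_nonempty with rfl | hne
  · simp
  have hcard : (0 : ℝ) < #s := by exact_mod_cast hne.card_pos
  have hgm := Real.geom_mean_le_arith_mean s (fun _ => 1) f (fun _ _ => zero_le_one)
    (by simpa using hcard) hf
  simp only [Real.rpow_one, sum_const, nsmul_eq_mul, mul_one, one_mul] at hgm
  calc ∏ i ∈ s, f i = ((∏ i ∈ s, f i) ^ ((#s : ℝ)⁻¹)) ^ #s :=
        (Real.rpow_inv_natCast_pow (prod_nonneg hf) hne.card_pos.ne').symm
    _ ≤ ((∑ i ∈ s, f i) / #s) ^ #s := by gcongr; exact Real.rpow_nonneg (prod_nonneg hf) _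

theorem one_sub_sum_le_prod_one_sub {ι : Type*} (s : Finset ι) {f : ι → ℝ}
    (h0 : ∀ i ∈ s, 0 ≤ f i) (h1 : ∀ i ∈ s, f i ≤ 1) :
    1 - ∑ i ∈ s, f i ≤ ∏ i ∈ s, (1 - f i) := by
  induction s using Finset.cons_induction with
  | empty => simp
  | cons a s ha ih =>
    simp only [forall_mem_cons] at h0 h1
    rw [sum_cons, prod_cons]
    have hs := ih h0.2 h1.2
    have : 0 ≤ ∑ i ∈ s, f i := sum_nonneg h0.2
    nlinarith [h0.1, h1.1]

theorem prod_lt_prod_of_eqOn_compl {ι R : Type*} [Fintype ι] [DecidableEq ι] [CommSemiring R]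
    [PartialOrder R] [IsStrictOrderedRing R] {f g : ι → R} (s : Finset ι)
    (hpos : ∀ k ∉ s, 0 < f k) (heq : ∀ k ∉ s, f k = g k)
    (hlt : ∏ k ∈ s, f k < ∏ k ∈ s, g k) : ∏ k, f k < ∏ k, g k := by
  rw [← prod_mul_prod_compl s f, ← prod_mul_prod_compl s g,
    prod_congr rfl fun k hk => heq k (mem_compl.1 hk)]
  refine mul_lt_mul_of_pos_right hlt (prod_pos fun k hk => ?_)
  rw [← heq k (mem_compl.1 hk)]
  exact hpos k (mem_compl.1 hk)

theorem one_sub_div_mul_pow_le {y : ℝ} (hy : 1 ≤ y) (k : ℕ) :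
    (1 - k / y) * y ^ k ≤ (y - 1) ^ k := by
  have hbern := one_add_mul_le_pow (a := -y⁻¹) (by linarith [inv_le_one_of_one_le₀ hy]) k
  calc (1 - k / y) * y ^ k = (1 + k * -y⁻¹) * y ^ k := by ring
    _ ≤ (1 + -y⁻¹) ^ k * y ^ k := by gcongr
    _ = (y - 1) ^ k := by rw [← mul_pow]; congr 1; field_simp; ring

namespace Matrix.IsHermitian

variable {𝕜 : Type*} [RCLike 𝕜] {n : Type*} [Fintype n] [DecidableEq n] {A : Matrix n n 𝕜}

theorem det_one_sub_s1 (hA : A.IsHermitian) :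
    (1 - A).det = ∏ i, (1 - (hA.eigenvalues i : 𝕜)) := by
  simpa [eval_charpoly, Polynomial.eval_prod] using congrArg (Polynomial.eval 1) hA.charpoly_eq

open scoped Matrix.Norms.L2Operator in
theorem toEuclideanCLM_sub_smul_one_norm (hA : A.IsHermitian) (c : ℝ) :
    ‖toEuclideanCLM (n := n) (𝕜 := 𝕜) (A - c • 1)‖ = ‖fun i => hA.eigenvalues i - c‖ := by
  rw [← cstar_norm_def]
  set U := hA.eigenvectorUnitary
  have hconj : A - c • (1 : Matrix n n 𝕜) =
      U * diagonal (fun i => ((hA.eigenvalues i - c : ℝ) : 𝕜)) * (star U : unitary _) := by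
    have hdiag : diagonal (fun i => ((hA.eigenvalues i - c : ℝ) : 𝕜)) =
        diagonal (RCLike.ofReal ∘ hA.eigenvalues) - c • 1 := by
      ext i j
      by_cases h : i = j <;> simp [h, RCLike.real_smul_eq_coe_mul]
    rw [hdiag, mul_sub, sub_mul, Unitary.coe_star, ← Unitary.conjStarAlgAut_apply (S := 𝕜),
      ← hA.spectral_theorem, mul_smul_comm, smul_mul_assoc, mul_one,
      Unitary.mul_star_self_of_mem U.2]
  rw [hconj, CStarRing.norm_mul_coe_unitary, CStarRing.norm_coe_unitary_mul, l2_opNorm_diagonal]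
  simp only [Pi.norm_def, ← norm_toNNReal, RCLike.norm_ofReal, Real.norm_eq_abs]

end Matrix.IsHermitian

noncomputable def bcgTerm (x : ℝ) : ℝ := x / (1 - x) ^ 2

theorem bcgTerm_pos {x : ℝ} (h0 : 0 < x) (h1 : x < 1) : 0 < bcgTerm x :=
  div_pos h0 (pow_pos (sub_pos.2 h1) 2)

theorem bcgTerm_strictMonoOn : StrictMonoOn bcgTerm (Set.Ico 0 1) := by
  rintro x ⟨hx0, hx1⟩ y ⟨-, hy1⟩ hxy
  rw [bcgTerm, bcgTerm, div_lt_div_iff₀ (by nlinarith) (by nlinarith)]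
  have hxy1 : x * y < 1 := by nlinarith
  nlinarith [mul_pos (sub_pos.2 hxy) (sub_pos.2 hxy1)]

theorem bcgTerm_mul_lt_sq_midpoint {a b : ℝ} (ha : 0 ≤ a) (hab : a < b) (hs : a + b ≤ 4 / 5) :
    bcgTerm a * bcgTerm b < bcgTerm ((a + b) / 2) ^ 2 := by
  obtain ⟨c, hc⟩ : ∃ c, c = 1 - a - b := ⟨_, rfl⟩
  obtain ⟨p, hp⟩ : ∃ p, p = a * b := ⟨_, rfl⟩
  obtain ⟨q, hq⟩ : ∃ q, q = ((a + b) / 2) ^ 2 := ⟨_, rfl⟩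
  have hpq : p < q := by nlinarith [sq_pos_of_pos (sub_pos.2 hab)]
  have hqc : q ≤ c := by nlinarith
  have hp0 : 0 ≤ p := by nlinarith
  have e1 : bcgTerm a * bcgTerm b = p / (c + p) ^ 2 := by
    rw [bcgTerm, bcgTerm, div_mul_div_comm, ← mul_pow, hc, hp]; ring_nf
  have e2 : bcgTerm ((a + b) / 2) ^ 2 = q / (c + q) ^ 2 := by
    rw [bcgTerm, div_pow, ← pow_mul, hc, hq]; ring_nf
  rw [e1, e2, div_lt_div_iff₀ (by nlinarith) (by nlinarith)]
  -- `q (c + p)² - p (c + q)² = (q - p) (c² - p q)`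
  nlinarith [mul_pos (sub_pos.2 hpq) (sub_pos.2 (show p * q < c * c by nlinarith))]

section

variable {ι : Type*} [Fintype ι]

noncomputable def bcgProd (l : ι → ℝ) : ℝ := ∏ i, bcgTerm (l i)

noncomputable def bcgMax (n : ℕ) : ℝ := (n : ℝ) ^ n / ((n : ℝ) - 1) ^ (2 * n)

noncomputable def vertexBound (n : ℕ) (b : ℝ) : ℝ :=
  (1 - b) ^ (n - 3) / (((n : ℝ) - 1) ^ (n - 1) * b)

theorem bcgMax_pos {n : ℕ} (hn : 2 ≤ n) : 0 < bcgMax n := by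
  have : (1 : ℝ) < n := by exact_mod_cast hn
  exact div_pos (by positivity) (pow_pos (by linarith) _)

theorem bcgProd_eq (l : ι → ℝ) :
    bcgProd l = (∏ i, l i) / (∏ i, (1 - l i)) ^ 2 := by
  simp only [bcgProd, bcgTerm, prod_div_distrib, prod_pow]

theorem bcgProd_center (hn : 2 ≤ Fintype.card ι) :
    bcgProd (fun _ : ι => (Fintype.card ι : ℝ)⁻¹) = bcgMax (Fintype.card ι) := by
  set n := Fintype.card ι
  have hterm : bcgTerm (n : ℝ)⁻¹ = n / ((n : ℝ) - 1) ^ 2 := by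
    rw [bcgTerm]
    field_simp
  rw [bcgProd, prod_const, card_univ, hterm, div_pow, ← pow_mul, bcgMax, mul_comm]

theorem bcgProd_le_vertexBound (hn : 3 ≤ Fintype.card ι) {l : ι → ℝ}
    (hl : ∀ i, 0 ≤ l i) (hsum : ∑ i, l i ≤ 1) {j : ι} (hj0 : 0 < l j) (hj1 : l j < 1) :
    bcgProd l ≤ vertexBound (Fintype.card ι) (l j) := by
  classical
  set n := Fintype.card ι
  set b := l j
  set R := univ.erase j
  have hcardR : (#R : ℝ) = n - 1 := by
    rw [card_erase_of_mem (mem_univ j), card_univ, Nat.cast_pred (by omega)]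
  have hn1 : (0 : ℝ) < n - 1 := by
    have : (3 : ℝ) ≤ n := by exact_mod_cast hn
    linarith
  have hsumR : ∑ i ∈ R, l i ≤ 1 - b := by
    linarith [add_sum_erase univ l (mem_univ j)]
  have hnum : ∏ i, l i ≤ b * ((1 - b) / (n - 1)) ^ (n - 1) := by
    rw [← mul_prod_erase univ l (mem_univ j)]
    gcongr
    calc ∏ i ∈ R, l i ≤ ((∑ i ∈ R, l i) / #R) ^ #R :=
          Real.prod_le_arith_mean_pow_card R fun i _ => hl i
      _ ≤ ((1 - b) / (n - 1)) ^ (n - 1) := by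
          rw [hcardR, card_erase_of_mem (mem_univ j), card_univ]
          gcongr
          exact div_nonneg (sum_nonneg fun i _ => hl i) hn1.le
  have hden : (1 - b) * b ≤ ∏ i, (1 - l i) := by
    rw [← mul_prod_erase univ (fun i => 1 - l i) (mem_univ j)]
    have := one_sub_sum_le_prod_one_sub R (fun i _ => hl i)
      fun i _ => (single_le_sum (fun k _ => hl k) (mem_univ i)).trans hsum
    calc (1 - b) * b ≤ (1 - b) * (1 - ∑ i ∈ R, l i) := by gcongr; linarith
      _ ≤ (1 - b) * ∏ i ∈ R, (1 - l i) := by gcongr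
  have hb1 : 0 < 1 - b := by linarith
  calc bcgProd l ≤ b * ((1 - b) / (n - 1)) ^ (n - 1) / ((1 - b) * b) ^ 2 := by
        rw [bcgProd_eq]
        gcongr
    _ = vertexBound n b := by
        have hsplit : (1 - b) ^ (n - 1) = (1 - b) ^ (n - 3) * (1 - b) ^ 2 := by
          rw [← pow_add]; congr 1; omega
        rw [vertexBound, div_pow, hsplit]
        field_simp

theorem vertexBound_antitoneOn {n : ℕ} (hn : 2 ≤ n) :
    AntitoneOn (vertexBound n) (Set.Ioc 0 1) := by
  rintro b ⟨hb0, -⟩ b' ⟨-, hb'1⟩ hbb'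
  have : (0 : ℝ) < n - 1 := by
    have : (2 : ℝ) ≤ n := by exact_mod_cast hn
    linarith
  unfold vertexBound
  gcongr
  exact pow_nonneg (by linarith) _

theorem vertexBound_three_lt_bcgMax {b : ℝ} (hb : 3 / 5 < b) : vertexBound 3 b < bcgMax 3 := by
  rw [vertexBound, bcgMax, div_lt_div_iff₀ (by norm_num; linarith) (by norm_num)]
  norm_num
  linarith

theorem three_tenths_pow_mul_lt {n : ℕ} (hn : 3 ≤ n) :
    (3 / 10 : ℝ) ^ (n - 3) * ((n : ℝ) - 1) ^ (n + 1) < 7 / 10 * (n : ℝ) ^ n := by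
  induction n, hn using Nat.le_induction with
  | base => norm_num
  | succ n hn ih =>
    have hx : (3 : ℝ) ≤ n := by exact_mod_cast hn
    have hbern : 3 / 10 * ((n : ℝ) ^ 2) ^ (n + 1) ≤ ((n : ℝ) ^ 2 - 1) ^ (n + 1) := by
      refine le_trans ?_ (one_sub_div_mul_pow_le (by nlinarith) (n + 1))
      gcongr
      rw [le_sub_comm, div_le_iff₀ (by positivity)]
      push_cast
      nlinarith
    have hpos : (0 : ℝ) < ((n : ℝ) - 1) ^ (n + 1) := pow_pos (by linarith) _
    rw [show n + 1 - 3 = n - 3 + 1 by omega]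
    push_cast
    rw [add_sub_cancel_right, ← mul_lt_mul_iff_left₀ hpos]
    calc (3 / 10 : ℝ) ^ (n - 3 + 1) * (n : ℝ) ^ (n + 1 + 1) * ((n : ℝ) - 1) ^ (n + 1)
        = 3 / 10 * (n : ℝ) ^ (n + 2) * ((3 / 10) ^ (n - 3) * ((n : ℝ) - 1) ^ (n + 1)) := by ring
      _ < 3 / 10 * (n : ℝ) ^ (n + 2) * (7 / 10 * (n : ℝ) ^ n) := by gcongr
      _ = 7 / 10 * (3 / 10 * ((n : ℝ) ^ 2) ^ (n + 1)) := by ring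
      _ ≤ 7 / 10 * ((n : ℝ) ^ 2 - 1) ^ (n + 1) := by gcongr
      _ = 7 / 10 * ((n : ℝ) + 1) ^ (n + 1) * ((n : ℝ) - 1) ^ (n + 1) := by
        rw [mul_assoc, ← mul_pow]; ring

theorem vertexBound_seven_tenths_lt_bcgMax {n : ℕ} (hn : 3 ≤ n) :
    vertexBound n (7 / 10) < bcgMax n := by
  have hn1 : (0 : ℝ) < n - 1 := by
    have : (3 : ℝ) ≤ n := by exact_mod_cast hn
    linarith
  rw [vertexBound, bcgMax, div_lt_div_iff₀ (by positivity) (by positivity),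
    show 2 * n = (n + 1) + (n - 1) by omega, pow_add]
  calc (1 - 7 / 10 : ℝ) ^ (n - 3) * (((n : ℝ) - 1) ^ (n + 1) * ((n : ℝ) - 1) ^ (n - 1))
      = ((3 / 10) ^ (n - 3) * ((n : ℝ) - 1) ^ (n + 1)) * ((n : ℝ) - 1) ^ (n - 1) := by ring
    _ < (7 / 10 * (n : ℝ) ^ n) * ((n : ℝ) - 1) ^ (n - 1) := by
        exact mul_lt_mul_of_pos_right (three_tenths_pow_mul_lt hn) (by positivity)
    _ = (n : ℝ) ^ n * (((n : ℝ) - 1) ^ (n - 1) * (7 / 10)) := by ring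

def cappedSimplex (c : ℝ) : Set (ι → ℝ) :=
  Set.univ.pi (fun _ => Set.Icc 0 c) ∩ {l | ∑ i, l i ≤ 1}

theorem isCompact_cappedSimplex (c : ℝ) : IsCompact (cappedSimplex (ι := ι) c) :=
  (isCompact_univ_pi fun _ => isCompact_Icc).inter_right
    (isClosed_le (by fun_prop) continuous_const)

theorem continuousOn_bcgProd {c : ℝ} (hc : c < 1) :
    ContinuousOn bcgProd (cappedSimplex (ι := ι) c) := by
  refine continuousOn_finsetProd _ fun i _ => ContinuousOn.div (by fun_prop) (by fun_prop) ?_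
  intro l hl
  have := (hl.1 i trivial).2
  exact pow_ne_zero 2 (by linarith)

theorem center_mem_cappedSimplex {c : ℝ} (hc : (Fintype.card ι : ℝ)⁻¹ ≤ c) :
    (fun _ => (Fintype.card ι : ℝ)⁻¹) ∈ cappedSimplex (ι := ι) c := by
  refine ⟨fun _ _ => ⟨by positivity, hc⟩, ?_⟩
  change ∑ _ : ι, (Fintype.card ι : ℝ)⁻¹ ≤ 1
  rw [sum_const, card_univ, nsmul_eq_mul]
  exact mul_inv_le_one

section Maximizer

variable {μ : ι → ℝ}

theorem bcgMax_le_of_isMaxOn (hn : 3 ≤ Fintype.card ι)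
    (hmax : IsMaxOn bcgProd (cappedSimplex (7 / 10)) μ) : bcgMax (Fintype.card ι) ≤ bcgProd μ := by
  have h3 : (3 : ℝ) ≤ Fintype.card ι := by exact_mod_cast hn
  rw [← bcgProd_center (by omega)]
  exact hmax (center_mem_cappedSimplex (by rw [inv_le_comm₀ (by linarith) (by norm_num)]; linarith))

theorem pos_of_isMaxOn (hn : 3 ≤ Fintype.card ι) (hμ : μ ∈ cappedSimplex (7 / 10))
    (hmax : IsMaxOn bcgProd (cappedSimplex (7 / 10)) μ) (i : ι) : 0 < μ i := by
  refine (hμ.1 i trivial).1.lt_of_ne fun h => ?_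
  have hzero : bcgProd μ = 0 := prod_eq_zero (mem_univ i) (by simp [← h, bcgTerm])
  linarith [bcgMax_le_of_isMaxOn hn hmax, bcgMax_pos (n := Fintype.card ι) (by omega)]

theorem add_gt_of_isMaxOn (hn : 3 ≤ Fintype.card ι) (hμ : μ ∈ cappedSimplex (7 / 10))
    (hmax : IsMaxOn bcgProd (cappedSimplex (7 / 10)) μ) {i j : ι} (hij : μ i < μ j) :
    4 / 5 < μ i + μ j := by
  classical
  by_contra! hle
  have hne : i ≠ j := fun h => hij.ne (congrArg μ h)
  have hi := hμ.1 i trivial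
  have hj := hμ.1 j trivial
  set t := (μ i + μ j) / 2 with ht
  set s : Finset ι := {i, j}
  set ν := s.piecewise (fun _ => t) μ
  have hν_s : ∀ k ∈ s, ν k = t := fun k hk => s.piecewise_eq_of_mem _ _ hk
  have hν_off : ∀ k ∉ s, ν k = μ k := fun k hk => s.piecewise_eq_of_notMem _ _ hk
  have hν_i : ν i = t := hν_s i (by simp [s])
  have hν_j : ν j = t := hν_s j (by simp [s])
  have hν : ν ∈ cappedSimplex (7 / 10) := by
    refine ⟨fun k _ => ?_, ?_⟩
    · by_cases hk : k ∈ s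
      · rw [hν_s k hk]
        constructor <;> linarith [hi.1, hj.2, ht]
      · rw [hν_off k hk]
        exact hμ.1 k trivial
    · have hsum : ∑ k, ν k = ∑ k, μ k := by
        rw [← sum_add_sum_compl s ν, ← sum_add_sum_compl s μ, sum_pair hne, sum_pair hne, hν_i,
          hν_j, sum_congr rfl fun k hk => hν_off k (mem_compl.1 hk)]
        ring
      change ∑ k, ν k ≤ 1
      exact hsum ▸ hμ.2
  have hlt : bcgProd μ < bcgProd ν := by
    refine prod_lt_prod_of_eqOn_compl s
      (fun k _ => bcgTerm_pos (pos_of_isMaxOn hn hμ hmax k) (by linarith [(hμ.1 k trivial).2]))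
      (fun k hk => by rw [hν_off k hk]) ?_
    rw [prod_pair hne, prod_pair hne, hν_i, hν_j, ← sq]
    exact bcgTerm_mul_lt_sq_midpoint hi.1 hij hle
  exact (hmax hν).not_gt hlt

theorem eq_of_isMaxOn (hn : 3 ≤ Fintype.card ι) (hμ : μ ∈ cappedSimplex (7 / 10))
    (hmax : IsMaxOn bcgProd (cappedSimplex (7 / 10)) μ) (i j : ι) : μ i = μ j := by
  have huniv : (univ : Finset ι).Nonempty := univ_nonempty_iff.2 (Fintype.card_pos_iff.1 (by omega))
  obtain ⟨i₀, -, hmin⟩ := exists_min_image univ μ huniv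
  obtain ⟨j₀, -, hmax'⟩ := exists_max_image univ μ huniv
  suffices μ j₀ ≤ μ i₀ by
    linarith [hmin i (mem_univ _), hmin j (mem_univ _), hmax' i (mem_univ _), hmax' j (mem_univ _)]
  by_contra! hlt
  have h45 := add_gt_of_isMaxOn hn hμ hmax hlt
  have hb7 : μ j₀ ≤ 7 / 10 := (hμ.1 j₀ trivial).2
  have hsum : μ j₀ + (Fintype.card ι - 1) * μ i₀ ≤ 1 := by
    have := single_le_sum (f := fun k => μ k - μ i₀)
      (fun k _ => sub_nonneg.2 (hmin k (mem_univ k))) (mem_univ j₀)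
    rw [sum_sub_distrib, sum_const, card_univ, nsmul_eq_mul] at this
    have : ∑ k, μ k ≤ 1 := hμ.2
    linarith
  have hn3 : Fintype.card ι = 3 := by
    by_contra hne
    have : (4 : ℝ) ≤ Fintype.card ι := by exact_mod_cast (show 4 ≤ Fintype.card ι by omega)
    nlinarith
  have hvertex := bcgProd_le_vertexBound hn (fun k => (hμ.1 k trivial).1) hμ.2
    (pos_of_isMaxOn hn hμ hmax j₀) (by linarith)
  have hgap := bcgMax_le_of_isMaxOn hn hmax
  rw [hn3] at hsum hvertex hgap
  have hb : 3 / 5 < μ j₀ := by norm_num at hsum; linarith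
  linarith [vertexBound_three_lt_bcgMax hb]

theorem eq_center_of_isMaxOn (hn : 3 ≤ Fintype.card ι) (hμ : μ ∈ cappedSimplex (7 / 10))
    (hmax : IsMaxOn bcgProd (cappedSimplex (7 / 10)) μ) :
    μ = fun _ => (Fintype.card ι : ℝ)⁻¹ := by
  set n := Fintype.card ι
  obtain ⟨i⟩ : Nonempty ι := Fintype.card_pos_iff.1 (by omega)
  have hconst : ∀ k, μ k = μ i := fun k => eq_of_isMaxOn hn hμ hmax k i
  have h3 : (3 : ℝ) ≤ n := by exact_mod_cast hn
  have hle : μ i ≤ (n : ℝ)⁻¹ := by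
    have : ∑ k, μ k ≤ 1 := hμ.2
    simp only [hconst, sum_const, card_univ, nsmul_eq_mul] at this
    rw [inv_eq_one_div, le_div_iff₀ (by linarith)]
    linarith
  have hge : (n : ℝ)⁻¹ ≤ μ i := by
    have h := bcgMax_le_of_isMaxOn hn hmax
    rw [← bcgProd_center (by omega), bcgProd, bcgProd] at h
    simp only [hconst, prod_const, card_univ] at h
    have hinv : (n : ℝ)⁻¹ ∈ Set.Ico 0 1 := ⟨by positivity, inv_lt_one_of_one_lt₀ (by linarith)⟩
    have hmem : μ i ∈ Set.Ico 0 1 := ⟨(hμ.1 i trivial).1, by linarith [(hμ.1 i trivial).2]⟩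
    rw [← bcgTerm_strictMonoOn.le_iff_le hinv hmem]
    exact (pow_le_pow_iff_left₀ (bcgTerm_pos (by positivity) hinv.2).le
      (bcgTerm_pos (pos_of_isMaxOn hn hμ hmax i) hmem.2).le (by omega)).1 h
  funext k
  rw [hconst k]
  exact le_antisymm hle hge

theorem bcgProd_lt_bcgMax (hn : 3 ≤ Fintype.card ι) {l : ι → ℝ} (hl : l ∈ cappedSimplex (7 / 10))
    (hne : l ≠ fun _ => (Fintype.card ι : ℝ)⁻¹) : bcgProd l < bcgMax (Fintype.card ι) := by
  have h3 : (3 : ℝ) ≤ Fintype.card ι := by exact_mod_cast hn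
  obtain ⟨μ, hμ, hmax⟩ := (isCompact_cappedSimplex (7 / 10)).exists_isMaxOn
    ⟨_, center_mem_cappedSimplex (by rw [inv_le_comm₀ (by linarith) (by norm_num)]; linarith)⟩
    (continuousOn_bcgProd (by norm_num))
  have hμval : bcgProd μ = bcgMax (Fintype.card ι) := by
    rw [eq_center_of_isMaxOn hn hμ hmax, bcgProd_center (by omega)]
  refine (hμval ▸ hmax hl).lt_of_ne fun h => hne ?_
  exact eq_center_of_isMaxOn hn hl fun x hx => h ▸ hμval ▸ hmax hx

end Maximizer

theorem exists_lt_bcgMax_forall_far_bcgProd_le (hn : 3 ≤ Fintype.card ι)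
    {η : ℝ} (hη : 0 < η) :
    ∃ M < bcgMax (Fintype.card ι), ∀ l : ι → ℝ, (∀ i, 0 < l i) → ∑ i, l i ≤ 1 →
      (∃ i, η ≤ |l i - (Fintype.card ι : ℝ)⁻¹|) → bcgProd l ≤ M := by
  set c := (Fintype.card ι : ℝ)⁻¹
  set T := cappedSimplex (ι := ι) (7 / 10) ∩ {l | ∃ i, η ≤ |l i - c|}
  have hT : IsCompact T := by
    refine (isCompact_cappedSimplex _).inter_right ?_
    simp only [Set.ofPred_exists]
    exact isClosed_iUnion_of_finite fun i => isClosed_le continuous_const (by fun_prop)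
  obtain ⟨M₁, hM₁, hT₁⟩ := hT.exists_lt_forall_le
    ((continuousOn_bcgProd (by norm_num)).mono Set.inter_subset_left)
    fun l ⟨hl, i, hi⟩ => bcgProd_lt_bcgMax hn hl fun h => by simp [h, c] at hi; linarith
  refine ⟨max M₁ (vertexBound (Fintype.card ι) (7 / 10)),
    max_lt hM₁ (vertexBound_seven_tenths_lt_bcgMax hn), fun l hpos hsum hfar => ?_⟩
  by_cases hcap : ∀ i, l i ≤ 7 / 10
  · exact (hT₁ l ⟨⟨fun i _ => ⟨(hpos i).le, hcap i⟩, hsum⟩, hfar⟩).trans (le_max_left _ _)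
  obtain ⟨j, hj⟩ : ∃ j, 7 / 10 < l j := by simpa using hcap
  obtain ⟨k, hkj⟩ := Fintype.exists_ne_of_one_lt_card (by omega) j
  have hj1 : l j < 1 :=
    (single_lt_sum hkj (mem_univ j) (mem_univ k) (hpos k) fun i _ _ => (hpos i).le).trans_le hsum
  calc bcgProd l ≤ vertexBound (Fintype.card ι) (l j) :=
        bcgProd_le_vertexBound hn (fun i => (hpos i).le) hsum (hpos j) hj1
    _ ≤ vertexBound (Fintype.card ι) (7 / 10) :=
        vertexBound_antitoneOn (by omega) ⟨by norm_num, by norm_num⟩ ⟨hpos j, hj1.le⟩ hj.le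
    _ ≤ _ := le_max_right _ _

end

theorem rpow_half_div_pow_sq (n : ℕ) :
    ((n : ℝ) ^ ((n : ℝ) / 2) / ((n : ℝ) - 1) ^ n) ^ 2 = bcgMax n := by
  rw [div_pow, ← Real.rpow_mul_natCast n.cast_nonneg, ← pow_mul, bcgMax, mul_comm 2 n]
  norm_num

theorem Matrix.PosDef.sq_sqrt_det_div_det_one_sub {ι : Type*} [Fintype ι] [DecidableEq ι]
    {H : Matrix ι ι ℝ} (hH : H.PosDef) :
    (√H.det / (1 - H).det) ^ 2 = bcgProd hH.isHermitian.eigenvalues := by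
  rw [div_pow, Real.sq_sqrt hH.det_pos.le, hH.isHermitian.det_eq_prod_eigenvalues,
    hH.isHermitian.det_one_sub_s1, bcgProd_eq]
  simp

/-- **Stability of the BCG determinant inequality.** For `m ≥ 3` and every
`η > 0` there is `ε > 0` such that every positive definite symmetric real
`m × m` matrix `H` with `tr H ≤ 1` and
`(det H)^(1/2) / det(I - H) ≥ m^(m/2)/(m-1)^m - ε` satisfies
`‖H - (1/m) I‖ ≤ η` in the operator norm. -/
theorem bcg_det_stability (m : ℕ) (hm : 3 ≤ m) :
    ∀ η > (0 : ℝ), ∃ ε > (0 : ℝ),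
      ∀ H : Matrix (Fin m) (Fin m) ℝ, H.PosDef → H.trace ≤ 1 →
        (m : ℝ) ^ ((m : ℝ) / 2) / ((m : ℝ) - 1) ^ m - ε ≤
            Real.sqrt H.det / (1 - H).det →
        ‖Matrix.toEuclideanCLM (𝕜 := ℝ)
            (H - ((m : ℝ)⁻¹) • (1 : Matrix (Fin m) (Fin m) ℝ))‖ ≤ η := by
  intro η hη
  obtain ⟨M, hM, hfar⟩ :=
    exists_lt_bcgMax_forall_far_bcgProd_le (ι := Fin m) (by simpa using hm) hη
  simp only [Fintype.card_fin] at hM hfar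
  set B := (m : ℝ) ^ ((m : ℝ) / 2) / ((m : ℝ) - 1) ^ m
  have hB : 0 < B := by
    have : (1 : ℝ) < m := by exact_mod_cast (show 1 < m by omega)
    exact div_pos (Real.rpow_pos_of_pos (by linarith) _) (pow_pos (by linarith) _)
  have hMB : √M < B := by rwa [Real.sqrt_lt' hB, rpow_half_div_pow_sq]
  refine ⟨(B - √M) / 2, by linarith, fun H hH htr hF => ?_⟩
  have hHerm := hH.isHermitian
  rw [hHerm.toEuclideanCLM_sub_smul_one_norm, pi_norm_le_iff_of_nonneg hη.le]
  intro i
  by_contra! hi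
  have htr' : ∑ j, hHerm.eigenvalues j ≤ 1 := by simpa [hHerm.trace_eq_sum_eigenvalues] using htr
  have hle := hfar _ hH.eigenvalues_pos htr' ⟨i, hi.le⟩
  have : √H.det / (1 - H).det ≤ √M :=
    (le_abs_self _).trans (Real.abs_le_sqrt (hH.sq_sqrt_det_div_det_one_sub ▸ hle))
  linarith
end

section
/- Let $f : \mathbb{R}^m \to \mathbb{R}$ be defined on positive definite symmetric matrices via eigenvalues by $f(\lambda_1,\dots,\lambda_m) = \frac{\prod_i \lambda_i^{1/2}}{\prod_i (1-\lambda_i)}$ on the domain $\{\lambda \in (0,1)^m : \sum_i \lambda_i \leq 1\}$ with $m \geq 3$. Then $f$ attains its maximum only at the point $(\frac{1}{m},\dots,\frac{1}{m})$, and $f$ has no local maximum on the boundary face $\{\sum_i \lambda_i = 1\}$ other than this point. -/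
/-!
Write `f = ∏ᵢ φ(λᵢ)` with `φ(x) = √x / (1 - x)`, whose logarithmic derivative is
`ψ(x) = 1/(2x) + 1/(1-x)`. At a local maximum on the face `∑ λᵢ = 1`, moving mass between two
coordinates gives the Lagrange condition `ψ(λᵢ) = ψ(λⱼ)`, i.e. `λᵢ = λⱼ` or
`(1 - λᵢ)(1 - λⱼ) = 2 λᵢ λⱼ`. In the second case a third coordinate `c ≤ 1 - λᵢ - λⱼ = λᵢ λⱼ`
is smaller than both, so it is paired with each of them by the second alternative, and these two
relations force `λᵢ = λⱼ`. Hence the point is uniform.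

A maximum exists: rescaling a point with `∑ λᵢ < 1` onto the face increases every factor, and
near a vertex of the face AM-GM and Bernoulli make `f` smaller than at the centre, because for
`m ≥ 3` the numerator vanishes there at least as fast as the denominator. So the maximum over the
domain is attained on a compact part of the face.
-/

open Finset

/-- The eigenvalue functional `f(λ) = (∏ᵢ λᵢ^(1/2)) / (∏ᵢ (1 - λᵢ))`. -/
noncomputable def eigenFunctional (m : ℕ) (l : Fin m → ℝ) : ℝ :=
  (∏ i, Real.sqrt (l i)) / ∏ i, (1 - l i)

/-- The domain `{λ ∈ (0,1)^m : ∑ᵢ λᵢ ≤ 1}`. -/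
def eigenDomain (m : ℕ) : Set (Fin m → ℝ) :=
  {l | (∀ i, l i ∈ Set.Ioo (0 : ℝ) 1) ∧ ∑ i, l i ≤ 1}

namespace EigenFunctional

noncomputable def factor (x : ℝ) : ℝ := √x / (1 - x)

noncomputable def factorLogDeriv (x : ℝ) : ℝ := (2 * x)⁻¹ + (1 - x)⁻¹

lemma eigenFunctional_eq_prod (m : ℕ) (l : Fin m → ℝ) :
    eigenFunctional m l = ∏ i, factor (l i) :=
  (prod_div_distrib ..).symm

lemma factor_pos {x : ℝ} (h0 : 0 < x) (h1 : x < 1) : 0 < factor x :=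
  div_pos (Real.sqrt_pos.2 h0) (sub_pos.2 h1)

lemma factor_lt_factor {x y : ℝ} (hx : 0 ≤ x) (hxy : x < y) (hy : y < 1) :
    factor x < factor y :=
  div_lt_div₀ (Real.sqrt_lt_sqrt hx hxy) (by linarith) (Real.sqrt_nonneg y) (sub_pos.2 hy)

lemma hasDerivAt_factor {x : ℝ} (h0 : 0 < x) (h1 : x < 1) :
    HasDerivAt factor (factor x * factorLogDeriv x) x := by
  have hs : √x ^ 2 = x := Real.sq_sqrt h0.le
  have h1x : 1 - x ≠ 0 := (sub_pos.2 h1).ne'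
  refine ((Real.hasDerivAt_sqrt h0.ne').div ((hasDerivAt_id x).const_sub 1) h1x).congr_deriv ?_
  simp only [factor, factorLogDeriv, id]
  field_simp
  rw [hs]
  ring

lemma eigenFunctional_pos {m : ℕ} {l : Fin m → ℝ} (hl : ∀ i, l i ∈ Set.Ioo (0 : ℝ) 1) :
    0 < eigenFunctional m l := by
  rw [eigenFunctional_eq_prod]
  exact prod_pos fun i _ => factor_pos (hl i).1 (hl i).2

lemma hasDerivAt_eigenFunctional_add_smul {m : ℕ} {l : Fin m → ℝ}
    (hl : ∀ i, l i ∈ Set.Ioo (0 : ℝ) 1) (v : Fin m → ℝ) :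
    HasDerivAt (fun t : ℝ => eigenFunctional m (l + t • v))
      (eigenFunctional m l * ∑ i, factorLogDeriv (l i) * v i) 0 := by
  classical
  have hline : ∀ i, HasDerivAt (fun t : ℝ => factor (l i + t * v i))
      (factor (l i) * factorLogDeriv (l i) * v i) 0 := by
    intro i
    have h := (hasDerivAt_id (0 : ℝ)).mul_const (v i) |>.const_add (l i)
    simp only [id, one_mul] at h
    exact (hasDerivAt_factor (hl i).1 (hl i).2).comp_of_eq 0 h (by simp)
  have hprod : (fun t : ℝ => eigenFunctional m (l + t • v)) =
      fun t => ∏ i, factor (l i + t * v i) :=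
    funext fun t => eigenFunctional_eq_prod m _
  rw [hprod]
  refine (HasDerivAt.fun_finsetProd fun i _ => hline i).congr_deriv ?_
  simp only [zero_mul, add_zero, smul_eq_mul, mul_sum, eigenFunctional_eq_prod]
  refine sum_congr rfl fun i _ => ?_
  rw [← prod_erase_mul _ _ (mem_univ i)]
  ring

def eigenFace (m : ℕ) : Set (Fin m → ℝ) :=
  {l | (∀ i, l i ∈ Set.Ioo (0 : ℝ) 1) ∧ ∑ i, l i = 1}

lemma eigenFace_subset_eigenDomain (m : ℕ) : eigenFace m ⊆ eigenDomain m :=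
  fun _ hl => ⟨hl.1, hl.2.le⟩

lemma factorLogDeriv_eq_of_isLocalMaxOn {m : ℕ} {l : Fin m → ℝ} (hl : l ∈ eigenFace m)
    (hmax : IsLocalMaxOn (eigenFunctional m) (eigenDomain m) l) (i j : Fin m) :
    factorLogDeriv (l i) = factorLogDeriv (l j) := by
  classical
  let v : Fin m → ℝ := Pi.single i 1 - Pi.single j 1
  let γ : ℝ → Fin m → ℝ := fun t => l + t • v
  have hγ : Continuous γ := by fun_prop
  have hsum : ∀ t, ∑ k, γ t k = 1 := fun t => by
    simp [γ, v, sum_add_distrib, ← mul_sum, hl.2]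
  -- `γ t` stays on the face, so it lies in the domain for `t` near `0`.
  let U : Set ℝ := γ ⁻¹' Set.univ.pi fun _ => Set.Ioo 0 1
  have hU : U ∈ nhds 0 := by
    refine (isOpen_set_pi Set.finite_univ fun _ _ => isOpen_Ioo).preimage hγ |>.mem_nhds ?_
    simpa [U, γ] using hl.1
  have hUsub : U ⊆ γ ⁻¹' eigenDomain m := fun t ht =>
    ⟨fun k => ht k (Set.mem_univ k), (hsum t).le⟩
  have hγ0 : γ 0 = l := by simp [γ]
  have hloc : IsLocalMax (fun t => eigenFunctional m (γ t)) 0 :=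
    ((hγ0 ▸ hmax).comp_continuousOn hUsub hγ.continuousOn (mem_of_mem_nhds hU)).isLocalMax hU
  have hderiv := (hasDerivAt_eigenFunctional_add_smul hl.1 v).deriv
  rw [hloc.deriv_eq_zero, eq_comm, mul_eq_zero] at hderiv
  have hsumv : ∑ k, factorLogDeriv (l k) * v k = factorLogDeriv (l i) - factorLogDeriv (l j) := by
    simp [v, mul_sub, Pi.single_apply]
  rw [hsumv, sub_eq_zero] at hderiv
  exact hderiv.resolve_left (eigenFunctional_pos hl.1).ne'

lemma eq_or_of_factorLogDeriv_eq {x y : ℝ} (hx0 : 0 < x) (hx1 : x < 1) (hy0 : 0 < y)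
    (hy1 : y < 1) (h : factorLogDeriv x = factorLogDeriv y) :
    x = y ∨ (1 - x) * (1 - y) = 2 * (x * y) := by
  have h1x : 1 - x ≠ 0 := (sub_pos.2 hx1).ne'
  have h1y : 1 - y ≠ 0 := (sub_pos.2 hy1).ne'
  unfold factorLogDeriv at h
  field_simp at h
  have key : (x - y) * ((1 - x) * (1 - y) - 2 * (x * y)) = 0 := by linear_combination -h
  rcases mul_eq_zero.1 key with h | h
  · exact .inl (sub_eq_zero.1 h)
  · exact .inr (sub_eq_zero.1 h)

lemma eq_of_factorLogDeriv_eq_of_add_add_le {a b c : ℝ} (ha0 : 0 < a) (ha1 : a < 1)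
    (hb0 : 0 < b) (hb1 : b < 1) (hc0 : 0 < c) (habc : a + b + c ≤ 1)
    (hab : factorLogDeriv a = factorLogDeriv b) (hac : factorLogDeriv a = factorLogDeriv c) :
    a = b := by
  have hc1 : c < 1 := by linarith
  by_contra hne
  have hrel := (eq_or_of_factorLogDeriv_eq ha0 ha1 hb0 hb1 hab).resolve_left hne
  have hca : c < a := by nlinarith
  have hcb : c < b := by nlinarith
  have hrac := (eq_or_of_factorLogDeriv_eq ha0 ha1 hc0 hc1 hac).resolve_left hca.ne'
  have hrbc := (eq_or_of_factorLogDeriv_eq hb0 hb1 hc0 hc1 (hab ▸ hac)).resolve_left hcb.ne'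
  have : (a - b) * (1 + c) = 0 := by linear_combination hrbc - hrac
  exact hne (sub_eq_zero.1 ((mul_eq_zero.1 this).resolve_right (by linarith)))

lemma eq_const_of_isLocalMaxOn {m : ℕ} (hm : 3 ≤ m) {l : Fin m → ℝ} (hl : l ∈ eigenFace m)
    (hmax : IsLocalMaxOn (eigenFunctional m) (eigenDomain m) l) :
    l = fun _ => (m : ℝ)⁻¹ := by
  have hall : ∀ i j, l i = l j := by
    intro i j
    by_cases hij : i = j
    · rw [hij]
    obtain ⟨k, hki, hkj⟩ := ENat.exists_ne_ne_of_three_le (by simpa using hm) i j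
    have hsum3 : l i + l j + l k ≤ 1 := by
      have := sum_le_univ_sum_of_nonneg (s := {i, j, k}) fun x => (hl.1 x).1.le
      rwa [sum_insert (by simp [hij, hki.symm]), sum_pair hkj.symm, ← add_assoc, hl.2] at this
    have hφ := factorLogDeriv_eq_of_isLocalMaxOn hl hmax
    exact eq_of_factorLogDeriv_eq_of_add_add_le (hl.1 i).1 (hl.1 i).2 (hl.1 j).1 (hl.1 j).2
      (hl.1 k).1 hsum3 (hφ i j) (hφ i k)
  funext i
  have hmi : (m : ℝ) * l i = 1 := by
    simpa [hall _ i] using hl.2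
  rw [eq_inv_of_mul_eq_one_right hmi]

lemma exists_mem_eigenFace_lt {m : ℕ} (hm : 2 ≤ m) {l : Fin m → ℝ}
    (hl : ∀ i, l i ∈ Set.Ioo (0 : ℝ) 1) (hs : ∑ i, l i < 1) :
    ∃ y ∈ eigenFace m, eigenFunctional m l < eigenFunctional m y := by
  have : Nontrivial (Fin m) := Fin.nontrivial_iff_two_le.2 hm
  set S := ∑ i, l i
  have hS : 0 < S := sum_pos (fun i _ => (hl i).1) univ_nonempty
  have hlt : ∀ i, l i < S := fun i =>
    have ⟨j, hji⟩ := exists_ne i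
    single_lt_sum hji (mem_univ i) (mem_univ j) (hl j).1 fun k _ _ => (hl k).1.le
  have hy : ∀ i, l i / S ∈ Set.Ioo (0 : ℝ) 1 := fun i =>
    ⟨div_pos (hl i).1 hS, (div_lt_one hS).2 (hlt i)⟩
  refine ⟨fun i => l i / S, ⟨hy, by rw [← sum_div, div_self hS.ne']⟩, ?_⟩
  simp only [eigenFunctional_eq_prod]
  refine prod_lt_prod_of_nonempty (fun i _ => factor_pos (hl i).1 (hl i).2)
    (fun i _ => factor_lt_factor (hl i).1.le ?_ (hy i).2) univ_nonempty
  exact (lt_div_iff₀ hS).2 (mul_lt_of_lt_one_right (hl i).1 hs)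

lemma prod_le_mean_pow {ι : Type*} (s : Finset ι) {x : ι → ℝ} (hx : ∀ i ∈ s, 0 ≤ x i) :
    ∏ i ∈ s, x i ≤ ((∑ i ∈ s, x i) / #s) ^ #s := by
  rcases s.eq_empty_or_nonempty with rfl | hne
  · simp
  have hn : (0 : ℝ) < #s := by exact_mod_cast hne.card_pos
  have hgm := Real.geom_mean_le_arith_mean_weighted s (fun _ => (#s : ℝ)⁻¹) x
    (fun _ _ => by positivity) (by simp [hn.ne']) hx
  rw [← mul_sum, inv_mul_eq_div] at hgm
  calc ∏ i ∈ s, x i = (∏ i ∈ s, x i ^ (#s : ℝ)⁻¹) ^ #s := by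
        rw [← prod_pow]
        refine prod_congr rfl fun i hi => ?_
        rw [← Real.rpow_mul_natCast (hx i hi), inv_mul_cancel₀ hn.ne', Real.rpow_one]
    _ ≤ ((∑ i ∈ s, x i) / #s) ^ #s :=
        pow_le_pow_left₀ (prod_nonneg fun i hi => Real.rpow_nonneg (hx i hi) _) hgm _

lemma sq_eigenFunctional {m : ℕ} {l : Fin m → ℝ} (hl : ∀ i, 0 ≤ l i) :
    eigenFunctional m l ^ 2 = (∏ i, l i) / (∏ i, (1 - l i)) ^ 2 := by
  rw [eigenFunctional, div_pow, ← prod_pow]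
  simp only [Real.sq_sqrt (hl _)]

lemma sq_eigenFunctional_const (m : ℕ) :
    eigenFunctional m (fun _ => (m : ℝ)⁻¹) ^ 2 = ((m : ℝ) / ((m : ℝ) - 1) ^ 2) ^ m := by
  rw [sq_eigenFunctional fun _ => by positivity]
  simp only [prod_const, card_univ, Fintype.card_fin]
  rw [pow_right_comm, ← div_pow]
  rcases eq_or_ne (m : ℝ) 0 with hm | hm
  · simp [hm]
  · congr 1
    field_simp

lemma vertex_bound_nat (k : ℕ) : 64 * (k + 2) ^ 4 < 49 * 8 ^ k * (k + 3) ^ (k + 3) := by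
  rcases k with _ | k
  · norm_num
  calc 64 * (k + 1 + 2) ^ 4 < 64 * (k + 4) ^ 4 := by gcongr; omega
    _ ≤ 49 * 8 ^ (k + 1) * (k + 4) ^ (k + 4) := by
        gcongr
        · calc 64 ≤ 49 * 8 ^ 1 := by norm_num
            _ ≤ 49 * 8 ^ (k + 1) := by gcongr <;> omega
        · omega
        · omega

-- With `m = k + 3` and `δ = 1 - λᵢ`, the left side bounds `f(λ)²` and the right side is
-- `f(1/m, …, 1/m)²`.
lemma vertex_bound (k : ℕ) {δ : ℝ} (hδ0 : 0 < δ) (hδ : 8 * (k + 2) * δ < 1) :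
    (δ / (k + 2)) ^ (k + 2) / (δ * (7 / 8)) ^ 2 < ((k + 3) / (k + 2) ^ 2) ^ (k + 3) := by
  have hkey : 64 * ((k : ℝ) + 2) ^ 4 < 49 * 8 ^ k * ((k : ℝ) + 3) ^ (k + 3) := by
    exact_mod_cast vertex_bound_nat k
  set N : ℝ := k + 2
  set M : ℝ := k + 3
  have hN : 0 < N := by positivity
  clear_value N M
  have hpow : (8 * N * δ) ^ k ≤ 1 := pow_le_one₀ (by positivity) hδ.le
  calc (δ / N) ^ (k + 2) / (δ * (7 / 8)) ^ 2
        = 64 * (8 * N * δ) ^ k / (49 * 8 ^ k * N ^ (2 * k + 2)) := by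
          rw [div_pow, show 2 * k + 2 = k + (k + 2) by ring, pow_add]
          field_simp [hδ0.ne', hN.ne']
          ring
    _ ≤ 64 / (49 * 8 ^ k * N ^ (2 * k + 2)) := by gcongr; linarith
    _ < M ^ (k + 3) / N ^ (2 * k + 6) := by
          rw [div_lt_div_iff₀ (by positivity) (by positivity)]
          calc 64 * N ^ (2 * k + 6) = N ^ (2 * k + 2) * (64 * N ^ 4) := by ring
            _ < N ^ (2 * k + 2) * (49 * 8 ^ k * M ^ (k + 3)) := by gcongr
            _ = M ^ (k + 3) * (49 * 8 ^ k * N ^ (2 * k + 2)) := by ring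
    _ = (M / N ^ 2) ^ (k + 3) := by rw [div_pow, ← pow_mul]; ring

lemma eigenFunctional_lt_const_of_near_vertex {m : ℕ} (hm : 3 ≤ m) {l : Fin m → ℝ}
    (hl : l ∈ eigenFace m) {i₀ : Fin m} (hi₀ : 1 - (8 * ((m : ℝ) - 1))⁻¹ < l i₀) :
    eigenFunctional m l < eigenFunctional m (fun _ => (m : ℝ)⁻¹) := by
  obtain ⟨k, rfl⟩ : ∃ k, m = k + 3 := ⟨m - 3, by omega⟩
  set δ := 1 - l i₀ with hδdef
  have hδ0 : 0 < δ := sub_pos.2 (hl.1 i₀).2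
  have hδ1 : δ < 1 := sub_lt_self 1 (hl.1 i₀).1
  have hN : ((k + 3 : ℕ) : ℝ) - 1 = k + 2 := by push_cast; ring
  rw [hN] at hi₀
  have hδ : 8 * ((k : ℝ) + 2) * δ < 1 := by
    have h8 : (0 : ℝ) < 8 * (k + 2) := by positivity
    calc 8 * ((k : ℝ) + 2) * δ < 8 * (k + 2) * (8 * ((k : ℝ) + 2))⁻¹ := by gcongr; linarith
      _ = 1 := mul_inv_cancel₀ h8.ne'
  set s := univ.erase i₀
  have hs : #s = k + 2 := by simp [s]
  have hsum : ∑ j ∈ s, l j = δ :=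
    eq_sub_of_add_eq ((sum_erase_add _ _ (mem_univ i₀)).trans hl.2)
  have hnum : ∏ j, l j ≤ (δ / (k + 2)) ^ (k + 2) := by
    rw [← mul_prod_erase univ l (mem_univ i₀)]
    have hs_le : ∏ j ∈ s, l j ≤ (δ / (k + 2)) ^ (k + 2) := by
      simpa [hsum, hs] using prod_le_mean_pow s fun j _ => (hl.1 j).1.le
    nlinarith [(hl.1 i₀).2, prod_nonneg fun j (_ : j ∈ s) => (hl.1 j).1.le]
  have hden : δ * (7 / 8) ≤ ∏ j, (1 - l j) := by
    rw [← mul_prod_erase univ (fun j => 1 - l j) (mem_univ i₀)]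
    refine mul_le_mul_of_nonneg_left ?_ hδ0.le
    calc (7 / 8 : ℝ) ≤ 1 + ((k + 2 : ℕ) : ℝ) * (-δ) := by push_cast; linarith
      _ ≤ (1 + -δ) ^ (k + 2) := one_add_mul_le_pow (by linarith) _
      _ = ∏ j ∈ s, (1 - δ) := by rw [prod_const, hs, ← sub_eq_add_neg]
      _ ≤ ∏ j ∈ s, (1 - l j) := prod_le_prod (fun j _ => by linarith) fun j hj => by
          linarith [single_le_sum (fun i (_ : i ∈ s) => (hl.1 i).1.le) hj]
  have hu : 0 < eigenFunctional (k + 3) (fun _ => ((k + 3 : ℕ) : ℝ)⁻¹) :=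
    eigenFunctional_pos fun _ => ⟨by positivity, inv_lt_one_of_one_lt₀ (by norm_cast; omega)⟩
  refine lt_of_pow_lt_pow_left₀ 2 hu.le ?_
  rw [sq_eigenFunctional fun j => (hl.1 j).1.le, sq_eigenFunctional_const, hN]
  calc (∏ j, l j) / (∏ j, (1 - l j)) ^ 2 ≤ (δ / (k + 2)) ^ (k + 2) / (δ * (7 / 8)) ^ 2 :=
        div_le_div₀ (by positivity) hnum (by positivity) (by gcongr)
    _ < _ := by push_cast; exact vertex_bound k hδ0 hδ

lemma isMaxOn_eigenDomain_of_forall_eigenFace_le {m : ℕ} (hm : 2 ≤ m) {w : Fin m → ℝ}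
    (h : ∀ x ∈ eigenFace m, eigenFunctional m x ≤ eigenFunctional m w) :
    IsMaxOn (eigenFunctional m) (eigenDomain m) w := by
  intro x hx
  rcases hx.2.eq_or_lt with hs | hs
  · exact h x ⟨hx.1, hs⟩
  · obtain ⟨y, hy, hlt⟩ := exists_mem_eigenFace_lt hm hx.1 hs
    exact hlt.le.trans (h y hy)

lemma exists_mem_eigenFace_isMaxOn {m : ℕ} (hm : 3 ≤ m) :
    ∃ w ∈ eigenFace m, IsMaxOn (eigenFunctional m) (eigenDomain m) w := by
  have hmR : (3 : ℝ) ≤ m := by exact_mod_cast hm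
  set c : ℝ := 1 - (8 * ((m : ℝ) - 1))⁻¹
  have hc : c < 1 := sub_lt_self _ (inv_pos.2 (by linarith))
  set u : Fin m → ℝ := fun _ => (m : ℝ)⁻¹
  have hu : u ∈ eigenFace m := by
    refine ⟨fun _ => ⟨by positivity, inv_lt_one_of_one_lt₀ (by linarith)⟩, ?_⟩
    simp [u, mul_inv_cancel₀ (by positivity : (m : ℝ) ≠ 0)]
  have huc : (m : ℝ)⁻¹ ≤ c := by
    have h1 : (m : ℝ)⁻¹ ≤ 3⁻¹ := inv_anti₀ (by norm_num) hmR
    have h2 : (8 * ((m : ℝ) - 1))⁻¹ ≤ 16⁻¹ := inv_anti₀ (by norm_num) (by linarith)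
    linarith
  -- Maximize over the compact part of the face where no coordinate exceeds `c`;
  -- beyond `c` the functional is below its value at `u`.
  set T := Set.Icc 0 (fun _ => c) ∩ {x : Fin m → ℝ | ∑ i, x i = 1}
  have huT : u ∈ T := ⟨⟨fun i => (hu.1 i).1.le, fun _ => huc⟩, hu.2⟩
  have hT : IsCompact T := isCompact_Icc.inter_right (isClosed_eq (by fun_prop) continuous_const)
  have hcont : ContinuousOn (eigenFunctional m) T := by
    refine ContinuousOn.div (by fun_prop) (by fun_prop) fun x hx => ?_
    exact (prod_pos fun i _ => sub_pos.2 ((hx.1.2 i).trans_lt hc)).ne'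
  obtain ⟨w, hwT, hwmax⟩ := hT.exists_isMaxOn ⟨u, huT⟩ hcont
  have hfu : eigenFunctional m u ≤ eigenFunctional m w := hwmax huT
  have hw : w ∈ eigenFace m := by
    refine ⟨fun i => ⟨(hwT.1.1 i).lt_of_ne fun h0 => ?_, (hwT.1.2 i).trans_lt hc⟩, hwT.2⟩
    have : eigenFunctional m w = 0 := by
      rw [eigenFunctional_eq_prod]
      exact prod_eq_zero (mem_univ i) (by simp [factor, ← h0])
    linarith [eigenFunctional_pos hu.1]
  refine ⟨w, hw, isMaxOn_eigenDomain_of_forall_eigenFace_le (by omega) fun x hx => ?_⟩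
  by_cases hxc : ∀ i, x i ≤ c
  · exact hwmax ⟨⟨fun i => (hx.1 i).1.le, hxc⟩, hx.2⟩
  · obtain ⟨i₀, hi₀⟩ := not_forall.1 hxc
    exact (eigenFunctional_lt_const_of_near_vertex hm hx (not_le.1 hi₀)).le.trans hfu

end EigenFunctional

open EigenFunctional in
/-- **Eigenvalue reformulation of the BCG inequality.** For `m ≥ 3` the
functional `f` attains its maximum on the domain only at `(1/m, …, 1/m)`, and
has no local maximum on the boundary face `{∑ λᵢ = 1}` other than this point. -/
theorem eigenFunctional_max (m : ℕ) (hm : 3 ≤ m) :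
    (∀ l ∈ eigenDomain m,
        eigenFunctional m l ≤ eigenFunctional m (fun _ => (m : ℝ)⁻¹)) ∧
    (∀ l ∈ eigenDomain m,
        eigenFunctional m l = eigenFunctional m (fun _ => (m : ℝ)⁻¹) →
          l = fun _ => (m : ℝ)⁻¹) ∧
    (∀ l : Fin m → ℝ, (∀ i, l i ∈ Set.Ioo (0 : ℝ) 1) → ∑ i, l i = 1 →
        l ≠ (fun _ => (m : ℝ)⁻¹) →
          ¬ IsLocalMaxOn (eigenFunctional m) (eigenDomain m) l) := by
  obtain ⟨w, hw, hwmax⟩ := exists_mem_eigenFace_isMaxOn hm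
  obtain rfl : w = fun _ => (m : ℝ)⁻¹ := eq_const_of_isLocalMaxOn hm hw hwmax.localize
  refine ⟨fun l hl => hwmax hl, fun l hl heq => ?_,
    fun l hl hs hne hmax => hne (eq_const_of_isLocalMaxOn hm ⟨hl, hs⟩ hmax)⟩
  rcases hl.2.eq_or_lt with hs | hs
  · refine eq_const_of_isLocalMaxOn hm ⟨hl.1, hs⟩ (IsMaxOn.localize ?_)
    exact isMaxOn_iff.2 fun x hx => (isMaxOn_iff.1 hwmax x hx).trans heq.ge
  · obtain ⟨y, hy, hlt⟩ := exists_mem_eigenFace_lt (by omega) hl.1 hs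
    exact absurd (hwmax (eigenFace_subset_eigenDomain m hy)) (heq ▸ hlt).not_ge
end
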